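/- The largest eigenvalue μ of the Laplacian matrix of the graph G strictly exceeds max over all vertices v of G of √(4·m_v³/d_v). (This gives a counterexample to conjectured bound 15 of Brankov, Hansen and Stevanović.) -/

import Mathlib

/-- The edge list of the graph. -/
def edgeList : List (Fin 12 × Fin 12) :=
  [(0,3),(0,4),(0,8),(1,2),(1,3),(1,8),(1,10),(2,5),(2,7),(2,11),(3,7),(3,11),(4,6),(4,7),(5,8),(5,9),(6,9),(6,10),(7,10),(9,11),(10,11)]

/-- The graph under consideration. -/
def G : SimpleGraph (Fin 12) where
  Adj v w := (v, w) ∈ edgeList ∨ (w, v) ∈ edgeList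
  symm := ⟨fun _ _ h => h.symm⟩
  loopless := ⟨by intro v; fin_cases v <;> decide⟩

instance : DecidableRel G.Adj :=
  fun v w => inferInstanceAs (Decidable ((v, w) ∈ edgeList ∨ (w, v) ∈ edgeList))

/-- `d v` is the degree of the vertex `v`, as a real number. -/
noncomputable def d (v : Fin 12) : ℝ := G.degree v

/-- `m v` is the average of the degrees of the neighbours of `v`. -/
noncomputable def m (v : Fin 12) : ℝ :=
  (∑ u ∈ G.neighborFinset v, (G.degree u : ℝ)) / d v

open scoped Matrix

noncomputable def xv : Fin 12 → ℝ := ![5,12,-12,-12,-5,5,5,12,-5,-5,-12,12]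

lemma hQ : xv ⬝ᵥ (G.lapMatrix ℝ *ᵥ xv) = 7518 := by
  rw [← Matrix.toLinearMap₂'_apply', SimpleGraph.lapMatrix_toLinearMap₂']
  norm_num [Fin.sum_univ_succ, xv]
  simp +decide
  norm_num

lemma hxx : xv ⬝ᵥ xv = 1014 := by
  norm_num [dotProduct, Fin.sum_univ_succ, xv]

lemma bnd (v : Fin 12) (s k : ℕ) (h1 : ∑ u ∈ G.neighborFinset v, G.degree u = s)
    (h2 : G.degree v = k) (hk : 0 < k) (h3 : 4*(s:ℝ)^3 * 64 ≤ 3375 * (k:ℝ)^4) :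
    4 * m v ^ 3 / d v ≤ 3375/64 := by
  have hk' : (0:ℝ) < k := by exact_mod_cast hk
  have hm : m v = (s:ℝ)/(k:ℝ) := by
    rw [m, d, h2, ← h1]
    push_cast
    ring_nf
  rw [hm, d, h2]
  rw [show 4 * ((s:ℝ)/k)^3 / k = 4*(s:ℝ)^3/(k:ℝ)^4 from by ring,
    div_le_div_iff₀ (by positivity) (by norm_num)]
  linarith

theorem laplacian_spectral_radius_exceeds_bound (μ : ℝ)
    (hmem : μ ∈ spectrum ℝ (G.lapMatrix ℝ))
    (hmax : ∀ ν ∈ spectrum ℝ (G.lapMatrix ℝ), ν ≤ μ) :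
    Finset.univ.sup' Finset.univ_nonempty (fun v => Real.sqrt (4 * m v ^ 3 / d v)) < μ := by
  classical
  have hL : (G.lapMatrix ℝ).IsHermitian :=
    (SimpleGraph.posSemidef_lapMatrix (R := ℝ) (G := G)).1
  have hN : (μ • (1 : Matrix (Fin 12) (Fin 12) ℝ) - G.lapMatrix ℝ).IsHermitian := by
    have hs : (G.lapMatrix ℝ)ᵀ = G.lapMatrix ℝ := G.isSymm_lapMatrix (R := ℝ)
    simp [Matrix.IsHermitian, Matrix.conjTranspose_sub, Matrix.conjTranspose_smul, hs]
  have hpsd : (μ • (1 : Matrix (Fin 12) (Fin 12) ℝ) - G.lapMatrix ℝ).PosSemidef := by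
    apply (Matrix.IsHermitian.posSemidef_iff_eigenvalues_nonneg hN).mpr
    intro i
    have key : ∀ r : ℝ, r ∈ spectrum ℝ (μ • (1 : Matrix (Fin 12) (Fin 12) ℝ) - G.lapMatrix ℝ) → 0 ≤ r := by
      intro r hr
      rw [show μ • (1 : Matrix (Fin 12) (Fin 12) ℝ) = algebraMap ℝ _ μ from
        (Algebra.algebraMap_eq_smul_one μ).symm, ← spectrum.singleton_sub_eq, Set.mem_sub] at hr
      obtain ⟨a, ha, b, hb, hab⟩ := hr
      rw [Set.mem_singleton_iff] at ha
      subst ha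
      rw [← hab]
      linarith [hmax b hb]
    exact key _ (Matrix.IsHermitian.eigenvalues_mem_spectrum_real hN i)
  have h0 := hpsd.dotProduct_mulVec_nonneg xv
  rw [star_trivial, Matrix.sub_mulVec, dotProduct_sub, Matrix.smul_mulVec,
    Matrix.one_mulVec, dotProduct_smul, hQ, hxx] at h0
  have hmu : (1253:ℝ)/169 ≤ μ := by
    simp at h0
    nlinarith
  rw [Finset.sup'_lt_iff]
  intro v _
  have hle : 4 * m v ^ 3 / d v ≤ 3375/64 := by
    fin_cases v
    · exact bnd 0 10 3 (by decide) (by decide) (by norm_num) (by norm_num)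
    · exact bnd 1 15 4 (by decide) (by decide) (by norm_num) (by norm_num)
    · exact bnd 2 15 4 (by decide) (by decide) (by norm_num) (by norm_num)
    · exact bnd 3 15 4 (by decide) (by decide) (by norm_num) (by norm_num)
    · exact bnd 4 10 3 (by decide) (by decide) (by norm_num) (by norm_num)
    · exact bnd 5 10 3 (by decide) (by decide) (by norm_num) (by norm_num)
    · exact bnd 6 10 3 (by decide) (by decide) (by norm_num) (by norm_num)
    · exact bnd 7 15 4 (by decide) (by decide) (by norm_num) (by norm_num)
    · exact bnd 8 10 3 (by decide) (by decide) (by norm_num) (by norm_num)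
    · exact bnd 9 10 3 (by decide) (by decide) (by norm_num) (by norm_num)
    · exact bnd 10 15 4 (by decide) (by decide) (by norm_num) (by norm_num)
    · exact bnd 11 15 4 (by decide) (by decide) (by norm_num) (by norm_num)
  calc Real.sqrt (4 * m v ^ 3 / d v) ≤ Real.sqrt (3375/64) := Real.sqrt_le_sqrt hle
    _ < 1253/169 := by
        rw [show Real.sqrt (3375/64) < 1253/169 ↔ (3375:ℝ)/64 < (1253/169)^2 from
          Real.sqrt_lt' (by norm_num)]
        norm_num
    _ ≤ μ := hmu
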